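/- arXiv:2504.15531 — 3 statements merged into one kernel-verified Lean document; each statement's English description precedes it below -/
import Mathlib

section
/- Let X be a finite-dimensional real vector space and let ρ be a left-continuous convex modular on X. Then ρ satisfies the Δ₂-property: for every sequence (x_j) ⊆ X with ρ(x_j) → 0 one has ρ(2x_j) → 0. -/
open Filter Topology ENNReal

/-- A convex modular on a real vector space `X`. -/
structure IsConvexModular {X : Type*} [AddCommGroup X] [Module ℝ X] (ρ : X → ℝ≥0∞) : Prop where
  zero_iff : ∀ u : X, ρ u = 0 ↔ u = 0
  neg_eq : ∀ u : X, ρ (-u) = ρ u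
  convex : ∀ α : ℝ, 0 ≤ α → α ≤ 1 → ∀ u v : X,
    ρ (α • u + (1 - α) • v) ≤ ENNReal.ofReal α * ρ u + ENNReal.ofReal (1 - α) * ρ v

/-- `X_ρ`, the modular vector space associated to `ρ`. -/
def modularSet {X : Type*} [AddCommGroup X] [Module ℝ X] (ρ : X → ℝ≥0∞) : Set X :=
  {v : X | ∃ l : ℝ, 0 < l ∧ ρ (l • v) < ⊤}

/-- `ρ` is left-continuous. -/
def IsLeftContinuousModular {X : Type*} [AddCommGroup X] [Module ℝ X] (ρ : X → ℝ≥0∞) : Prop :=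
  ∀ (u : X) (l₀ : ℝ), 0 < l₀ →
    Tendsto (fun l : ℝ => ρ (l • u)) (nhdsWithin l₀ (Set.Iio l₀)) (nhds (ρ (l₀ • u)))

/-!
The set `D = {ρ < ∞}` is convex and symmetric, so its span `Y` is finite-dimensional and `D` is a
neighbourhood of `0` in `Y`. There `ρ` is a finite convex function, hence continuous at `0`. Since
`ρ` grows along rays and is bounded below on a small sphere by compactness, `ρ (x j) → 0` forces
`x j → 0` in `Y`; then `2 • x j → 0`, and continuity at `0` gives `ρ (2 • x j) → 0`.
-/

open Metric Set

namespace IsConvexModular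

section VectorSpace

variable {X : Type*} [AddCommGroup X] [Module ℝ X] {ρ : X → ℝ≥0∞}

lemma map_zero (hρ : IsConvexModular ρ) : ρ 0 = 0 :=
  (hρ.zero_iff 0).2 rfl

lemma comp_linearMap {Y : Type*} [AddCommGroup Y] [Module ℝ Y] (hρ : IsConvexModular ρ)
    {f : Y →ₗ[ℝ] X} (hf : Function.Injective f) : IsConvexModular (ρ ∘ f) where
  zero_iff u := by simp only [Function.comp_apply, hρ.zero_iff, map_eq_zero_iff f hf]
  neg_eq u := by simp only [Function.comp_apply, map_neg, hρ.neg_eq]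
  convex a ha ha1 u v := by
    simpa only [Function.comp_apply, map_add, map_smul] using hρ.convex a ha ha1 (f u) (f v)

lemma smul_le (hρ : IsConvexModular ρ) {t : ℝ} (ht0 : 0 ≤ t) (ht1 : t ≤ 1) (u : X) :
    ρ (t • u) ≤ ρ u :=
  calc ρ (t • u) ≤ ENNReal.ofReal t * ρ u := by
        simpa [hρ.map_zero] using hρ.convex t ht0 ht1 u 0
    _ ≤ ρ u := mul_le_of_le_one_left' (ENNReal.ofReal_le_one.2 ht1)

lemma convex_setOf_ne_top (hρ : IsConvexModular ρ) : Convex ℝ {u | ρ u ≠ ⊤} := by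
  intro u (hu : ρ u ≠ ⊤) v (hv : ρ v ≠ ⊤) a b ha hb hab
  obtain rfl : b = 1 - a := by linarith
  exact ne_top_of_le_ne_top (by finiteness) (hρ.convex a ha (by linarith) u v)

lemma convexOn_toReal (hρ : IsConvexModular ρ) :
    ConvexOn ℝ {u | ρ u ≠ ⊤} fun u => (ρ u).toReal := by
  refine ⟨hρ.convex_setOf_ne_top, fun u (hu : ρ u ≠ ⊤) v (hv : ρ v ≠ ⊤) a b ha hb hab => ?_⟩
  obtain rfl : b = 1 - a := by linarith
  have := ENNReal.toReal_mono (by finiteness) (hρ.convex a ha (by linarith) u v)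
  rwa [ENNReal.toReal_add (by finiteness) (by finiteness), ENNReal.toReal_mul,
    ENNReal.toReal_mul, ENNReal.toReal_ofReal ha, ENNReal.toReal_ofReal hb] at this

lemma span_setOf_comp_ne_top_eq_top {Y : Type*} [AddCommGroup Y] [Module ℝ Y]
    {f : Y →ₗ[ℝ] X} (hf : Function.Injective f)
    (hrange : LinearMap.range f = Submodule.span ℝ {u | ρ u ≠ ⊤}) :
    Submodule.span ℝ {v | ρ (f v) ≠ ⊤} = ⊤ := by
  apply Submodule.map_injective_of_injective hf
  have hsub : {u | ρ u ≠ ⊤} ⊆ range f := by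
    rw [← LinearMap.coe_range, hrange]
    exact Submodule.subset_span
  rw [Submodule.map_span, Submodule.map_top, hrange]
  exact congrArg _ (image_preimage_eq_of_subset hsub)

end VectorSpace

section Normed

variable {E : Type*} [NormedAddCommGroup E] [NormedSpace ℝ E] [FiniteDimensional ℝ E]
  {ρ : E → ℝ≥0∞}

lemma zero_mem_interior (hρ : IsConvexModular ρ)
    (hspan : Submodule.span ℝ {u | ρ u ≠ ⊤} = ⊤) : (0 : E) ∈ interior {u | ρ u ≠ ⊤} := by
  have hconv := hρ.convex_setOf_ne_top
  have h0 : (0 : E) ∈ {u | ρ u ≠ ⊤} := by simp [hρ.map_zero]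
  have haff : affineSpan ℝ {u | ρ u ≠ ⊤} = ⊤ := by
    rw [← insert_eq_of_mem h0, AffineSubspace.ext_iff, affineSpan_insert_zero, hspan]
    simp
  obtain ⟨z, hz⟩ := hconv.interior_nonempty_iff_affineSpan_eq_top.2 haff
  have hnegz : -z ∈ closure {u | ρ u ≠ ⊤} :=
    subset_closure (by simpa [hρ.neg_eq] using interior_subset hz)
  simpa using hconv.combo_interior_closure_mem_interior hz hnegz
    (by norm_num : (0 : ℝ) < 1 / 2) (by norm_num : (0 : ℝ) ≤ 1 / 2) (by norm_num)

lemma continuousOn_interior (hρ : IsConvexModular ρ) :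
    ContinuousOn ρ (interior {u | ρ u ≠ ⊤}) := by
  have hreal := (hρ.convexOn_toReal.subset interior_subset
    hρ.convex_setOf_ne_top.interior).continuousOn isOpen_interior
  exact (ENNReal.continuous_ofReal.comp_continuousOn hreal).congr
    fun u hu => (ENNReal.ofReal_toReal (interior_subset hu)).symm

/-- `ρ` grows along rays, so its minimum on the sphere bounds it below outside the sphere. -/
lemma exists_pos_forall_lt_imp_norm_lt (hρ : IsConvexModular ρ) {δ : ℝ} (hδ : 0 < δ)
    (hsphere : sphere (0 : E) δ ⊆ interior {u | ρ u ≠ ⊤}) :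
    ∃ m, 0 < m ∧ ∀ y, ρ y < m → ‖y‖ < δ := by
  obtain ⟨m, hm0, hm⟩ : ∃ m, 0 < m ∧ ∀ z ∈ sphere (0 : E) δ, m ≤ ρ z := by
    rcases (sphere (0 : E) δ).eq_empty_or_nonempty with hempty | hne
    · exact ⟨1, one_pos, by simp [hempty]⟩
    obtain ⟨z₀, hz₀, hmin⟩ :=
      (isCompact_sphere 0 δ).exists_isMinOn hne (hρ.continuousOn_interior.mono hsphere)
    have hz₀ne : z₀ ≠ 0 := ne_of_mem_sphere hz₀ hδ.ne'
    exact ⟨ρ z₀, pos_iff_ne_zero.2 fun h => hz₀ne ((hρ.zero_iff z₀).1 h), hmin⟩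
  refine ⟨m, hm0, fun y hy => ?_⟩
  by_contra! hδy
  have hy0 : 0 < ‖y‖ := hδ.trans_le hδy
  have hscaled : (δ / ‖y‖) • y ∈ sphere (0 : E) δ := by
    rw [mem_sphere_zero_iff_norm, norm_smul, Real.norm_of_nonneg (by positivity),
      div_mul_cancel₀ _ hy0.ne']
  exact ((hm _ hscaled).trans (hρ.smul_le (by positivity) ((div_le_one hy0).2 hδy) y)).not_gt hy

lemma tendsto_zero_of_tendsto_modular_zero {ι : Type*} {l : Filter ι} {x : ι → E}
    (hρ : IsConvexModular ρ) (h0 : (0 : E) ∈ interior {u | ρ u ≠ ⊤})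
    (hx : Tendsto (fun i => ρ (x i)) l (𝓝 0)) : Tendsto x l (𝓝 0) := by
  obtain ⟨r, hr, hball⟩ := Metric.isOpen_iff.1 isOpen_interior 0 h0
  rw [Metric.tendsto_nhds]
  intro ε hε
  obtain ⟨m, hm, hlt⟩ := hρ.exists_pos_forall_lt_imp_norm_lt (δ := min ε (r / 2)) (by positivity)
    ((sphere_subset_ball ((min_le_right _ _).trans_lt (half_lt_self hr))).trans hball)
  filter_upwards [hx.eventually (gt_mem_nhds hm)] with i hi
  rw [dist_zero_right]
  exact (hlt _ hi).trans_le (min_le_left _ _)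

lemma tendsto_modular_smul_of_tendsto_modular_zero {ι : Type*} {l : Filter ι} {x : ι → E}
    (hρ : IsConvexModular ρ) (hspan : Submodule.span ℝ {u | ρ u ≠ ⊤} = ⊤)
    (hx : Tendsto (fun i => ρ (x i)) l (𝓝 0)) (c : ℝ) :
    Tendsto (fun i => ρ (c • x i)) l (𝓝 0) := by
  have h0 := hρ.zero_mem_interior hspan
  have hcont : Tendsto ρ (𝓝 0) (𝓝 0) := by
    simpa [hρ.map_zero] using
      (hρ.continuousOn_interior.continuousAt (isOpen_interior.mem_nhds h0)).tendsto
  have hcx : Tendsto (fun i => c • x i) l (𝓝 0) := by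
    simpa using (hρ.tendsto_zero_of_tendsto_modular_zero h0 hx).const_smul c
  exact hcont.comp hcx

end Normed

end IsConvexModular

theorem delta2_of_finiteDimensional_general {X : Type*} [AddCommGroup X] [Module ℝ X]
    [FiniteDimensional ℝ X]
    (ρ : X → ℝ≥0∞) (hρ : IsConvexModular ρ) :
    ∀ x : ℕ → X, Tendsto (fun j => ρ (x j)) atTop (nhds 0) →
      Tendsto (fun j => ρ ((2 : ℝ) • x j)) atTop (nhds 0) := by
  intro x hx
  set Y := Submodule.span ℝ {u | ρ u ≠ ⊤}
  -- `f` identifies a normed coordinate space with `Y`, the only part of `X` where `ρ` is finite.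
  let f : (Fin (Module.finrank ℝ Y) → ℝ) →ₗ[ℝ] X :=
    Y.subtype ∘ₗ (Module.finBasis ℝ Y).equivFun.symm.toLinearMap
  have hf : Function.Injective f := Y.injective_subtype.comp (LinearEquiv.injective _)
  have hrange : LinearMap.range f = Y := by
    rw [LinearMap.range_comp, LinearEquiv.range, Submodule.map_top, Submodule.range_subtype]
  obtain ⟨g, hgf⟩ := f.exists_leftInverse_of_injective (LinearMap.ker_eq_bot.2 hf)
  have hfg : ∀ᶠ j in atTop, f (g (x j)) = x j := by
    filter_upwards [hx.eventually (gt_mem_nhds one_pos)] with j hj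
    obtain ⟨v, hv⟩ : x j ∈ LinearMap.range f := by
      rw [hrange]
      exact Submodule.subset_span hj.ne_top
    rw [← hv, ← LinearMap.comp_apply g f, hgf, LinearMap.id_apply]
  have hxfg : Tendsto (fun j => ρ (f (g (x j)))) atTop (𝓝 0) :=
    hx.congr' (hfg.mono fun j hj => congrArg ρ hj.symm)
  refine ((hρ.comp_linearMap hf).tendsto_modular_smul_of_tendsto_modular_zero
    (IsConvexModular.span_setOf_comp_ne_top_eq_top hf hrange) hxfg 2).congr' ?_
  filter_upwards [hfg] with j hj
  simp only [Function.comp_apply, map_smul, hj]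

/-- Every left-continuous convex modular on a finite-dimensional real vector space
satisfies the `Δ₂`-property. -/
theorem delta2_of_finiteDimensional {X : Type*} [AddCommGroup X] [Module ℝ X]
    [FiniteDimensional ℝ X]
    (ρ : X → ℝ≥0∞) (hρ : IsConvexModular ρ) (hlc : IsLeftContinuousModular ρ) :
    ∀ x : ℕ → X, Tendsto (fun j => ρ (x j)) atTop (nhds 0) →
      Tendsto (fun j => ρ ((2 : ℝ) • x j)) atTop (nhds 0) :=
  delta2_of_finiteDimensional_general ρ hρ
end

section
/- Let p = (p_j) ⊆ [1,∞) be a sequence and let S ⊆ ℓ^{(p_n)} be the set of sequences with only finitely many nonzero terms. Then the τ_{ρ_p}-closure of S equals ℓ^{(p_n)}; in particular, (ℓ^{(p_n)}, τ_{ρ_p}) is separable. -/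
open Filter Topology ENNReal

/-- The Nakano modular `ρ_p((a_j)) = Σ_j |a_j|^{p_j}` on `ℝ^ℕ`. -/
noncomputable def seqModular (p : ℕ → ℝ) (a : ℕ → ℝ) : ℝ≥0∞ :=
  ∑' j, ENNReal.ofReal (|a j| ^ p j)

/-- A set `A ⊆ X_ρ` is `τ_ρ`-open. -/
def IsTauRhoOpen {X : Type*} [AddCommGroup X] [Module ℝ X] (ρ : X → ℝ≥0∞) (A : Set X) : Prop :=
  A ⊆ modularSet ρ ∧
    ∀ x ∈ A, ∃ ε : ℝ, 0 < ε ∧ {y ∈ modularSet ρ | ρ (y - x) < ENNReal.ofReal ε} ⊆ A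

/-- A set `C ⊆ X_ρ` is `τ_ρ`-closed if its complement in `X_ρ` is `τ_ρ`-open. -/
def IsTauRhoClosed {X : Type*} [AddCommGroup X] [Module ℝ X] (ρ : X → ℝ≥0∞) (C : Set X) : Prop :=
  C ⊆ modularSet ρ ∧ IsTauRhoOpen ρ (modularSet ρ \ C)

/-- The `τ_ρ`-closure of `A`. -/
def tauRhoClosure {X : Type*} [AddCommGroup X] [Module ℝ X] (ρ : X → ℝ≥0∞) (A : Set X) : Set X :=
  ⋂₀ {C : Set X | A ⊆ C ∧ IsTauRhoClosed ρ C}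

/-!
Finitely supported sequences with rational entries approximate every finitely supported `w` in
`ρ_p`, since `|t| ^ p_j ≤ |t|` for `|t| ≤ 1`, and a `τ_{ρ_p}`-closed set contains every point of
`ℓ^{(p_n)}` that it approximates in `ρ_p`. For general `x` this does not apply directly:
`ρ_p(x - truncation of x)` may be infinite, only `ρ_p(l x)` is finite for some `l > 0`. So fix `n`
with `1 / n ≤ l` and show by induction on `k` that a closed set containing the finitely supported
sequences contains every `y` agreeing with `(k / n) x` from some index on: replacing the tail of `y`
beyond `m` by that of `(k / n) x` changes it by a tail of `x / n`, whose modular tends to `0`.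
-/

open Set

section TauRho

variable {X : Type*} [AddCommGroup X] [Module ℝ X] {ρ : X → ℝ≥0∞}

theorem IsTauRhoClosed.mem_of_forall_exists_lt {C : Set X} (hC : IsTauRhoClosed ρ C) {y : X}
    (hy : y ∈ modularSet ρ) (h : ∀ ε > (0 : ℝ), ∃ z ∈ C, ρ (z - y) < ENNReal.ofReal ε) :
    y ∈ C := by
  by_contra hyC
  obtain ⟨ε, hε, hball⟩ := hC.2.2 y ⟨hy, hyC⟩
  obtain ⟨z, hzC, hz⟩ := h ε hε
  exact (hball ⟨hC.1 hzC, hz⟩).2 hzC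

theorem isTauRhoClosed_modularSet : IsTauRhoClosed ρ (modularSet ρ) := by
  refine ⟨subset_rfl, ?_⟩
  rw [sdiff_self]
  exact ⟨empty_subset _, fun x hx => hx.elim⟩

theorem tauRhoClosure_eq_modularSet {A : Set X} (hA : A ⊆ modularSet ρ)
    (h : ∀ C, A ⊆ C → IsTauRhoClosed ρ C → modularSet ρ ⊆ C) :
    tauRhoClosure ρ A = modularSet ρ :=
  (sInter_subset_of_mem (show A ⊆ modularSet ρ ∧ IsTauRhoClosed ρ (modularSet ρ) from
      ⟨hA, isTauRhoClosed_modularSet⟩)).antisymm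
    fun _ hx => mem_sInter.2 fun C hC => h C hC.1 hC.2 hx

end TauRho

section SeqModular

variable {p : ℕ → ℝ}

theorem seqModular_le_seqModular (hp : ∀ j, 0 ≤ p j) {a b : ℕ → ℝ} (h : ∀ j, |a j| ≤ |b j|) :
    seqModular p a ≤ seqModular p b :=
  ENNReal.tsum_le_tsum fun j =>
    ENNReal.ofReal_le_ofReal (Real.rpow_le_rpow (abs_nonneg _) (h j) (hp j))

theorem seqModular_eq_sum_range_add (a : ℕ → ℝ) (m : ℕ) :
    seqModular p a = ∑ j ∈ Finset.range m, ENNReal.ofReal (|a j| ^ p j) +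
      seqModular (fun i => p (i + m)) (fun i => a (i + m)) :=
  (ENNReal.summable.sum_add_tsum_nat_add' (f := fun j => ENNReal.ofReal (|a j| ^ p j))).symm

theorem tendsto_seqModular_tail {a : ℕ → ℝ} (ha : seqModular p a < ⊤) :
    Tendsto (fun m => seqModular (fun i => p (i + m)) (fun i => a (i + m))) atTop (𝓝 0) :=
  ENNReal.tendsto_sum_nat_add _ ha.ne

theorem seqModular_eq_sum_of_support_subset (hp : ∀ j, 0 < p j) {a : ℕ → ℝ} {s : Finset ℕ}
    (hs : Function.support a ⊆ s) :
    seqModular p a = ∑ j ∈ s, ENNReal.ofReal (|a j| ^ p j) :=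
  tsum_eq_sum fun j hj => by
    rw [Function.notMem_support.1 fun h => hj (hs h), abs_zero, Real.zero_rpow (hp j).ne',
      ENNReal.ofReal_zero]

theorem seqModular_zero (hp : ∀ j, 0 < p j) : seqModular p 0 = 0 := by
  simpa using seqModular_eq_sum_of_support_subset hp (s := ∅) (by simp)

theorem mem_modularSet_of_support_finite (hp : ∀ j, 0 < p j) {a : ℕ → ℝ}
    (ha : (Function.support a).Finite) : a ∈ modularSet (seqModular p) := by
  refine ⟨1, one_pos, ?_⟩
  rw [one_smul, seqModular_eq_sum_of_support_subset hp ha.coe_toFinset.symm.subset]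
  exact ENNReal.sum_lt_top.2 fun _ _ => ENNReal.ofReal_lt_top

theorem seqModular_lt_top_of_eventually_abs_le (hp : ∀ j, 0 ≤ p j) {a b : ℕ → ℝ}
    (h : ∀ᶠ j in atTop, |a j| ≤ |b j|) (hb : seqModular p b < ⊤) : seqModular p a < ⊤ := by
  obtain ⟨N, hN⟩ := eventually_atTop.1 h
  have htail : seqModular (fun i => p (i + N)) (fun i => a (i + N)) ≤ seqModular p b :=
    calc _ ≤ seqModular (fun i => p (i + N)) (fun i => b (i + N)) :=
          seqModular_le_seqModular (fun i => hp _) fun i => hN _ (Nat.le_add_left N i)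
      _ ≤ seqModular p b := by rw [seqModular_eq_sum_range_add b N]; exact le_add_self
  rw [seqModular_eq_sum_range_add a N]
  exact ENNReal.add_lt_top.2
    ⟨ENNReal.sum_lt_top.2 fun _ _ => ENNReal.ofReal_lt_top, htail.trans_lt hb⟩

theorem mem_modularSet_of_eventually_eq_mul (hp : ∀ j, 0 ≤ p j) {x y : ℕ → ℝ} {c : ℝ}
    (hx : x ∈ modularSet (seqModular p)) (hy : ∀ᶠ j in atTop, y j = c * x j) :
    y ∈ modularSet (seqModular p) := by
  obtain ⟨l, hl, hlx⟩ := hx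
  have hc : 0 < |c| + 1 := by positivity
  refine ⟨l / (|c| + 1), div_pos hl hc, seqModular_lt_top_of_eventually_abs_le hp ?_ hlx⟩
  filter_upwards [hy] with j hj
  have hlc : l / (|c| + 1) * |c| ≤ l := by
    rw [div_mul_eq_mul_div, div_le_iff₀ hc]
    nlinarith [abs_nonneg c]
  simp only [Pi.smul_apply, smul_eq_mul, hj, abs_mul, abs_of_pos hl, abs_of_pos (div_pos hl hc)]
  rw [← mul_assoc]
  exact mul_le_mul_of_nonneg_right hlc (abs_nonneg _)

theorem seqModular_le_tail_of_eq_zero (hp : ∀ j, 0 < p j) {u g : ℕ → ℝ} {m : ℕ}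
    (hu : ∀ j < m, u j = 0) (hug : ∀ j, m ≤ j → |u j| ≤ |g j|) :
    seqModular p u ≤ seqModular (fun i => p (i + m)) (fun i => g (i + m)) := by
  rw [seqModular_eq_sum_range_add u m, Finset.sum_eq_zero fun j hj => by
    rw [hu j (Finset.mem_range.1 hj), abs_zero, Real.zero_rpow (hp j).ne', ENNReal.ofReal_zero],
    zero_add]
  exact seqModular_le_seqModular (fun i => (hp _).le) fun i => hug _ (Nat.le_add_left m i)

theorem seqModular_le_card_mul (hp : ∀ j, 1 ≤ p j) {a : ℕ → ℝ} {s : Finset ℕ} {δ : ℝ}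
    (hs : Function.support a ⊆ s) (hδ : δ ≤ 1) (ha : ∀ j, |a j| ≤ δ) :
    seqModular p a ≤ s.card * ENNReal.ofReal δ := by
  rw [seqModular_eq_sum_of_support_subset (fun j => one_pos.trans_le (hp j)) hs,
    ← nsmul_eq_mul, ← Finset.sum_const]
  exact Finset.sum_le_sum fun j _ => ENNReal.ofReal_le_ofReal
    ((Real.rpow_le_self_of_le_one (abs_nonneg _) ((ha j).trans hδ) (hp j)).trans (ha j))

end SeqModular

section Density

variable {p : ℕ → ℝ} {C : Set (ℕ → ℝ)}

theorem IsTauRhoClosed.mem_of_eventually_eq_add_mul (hp : ∀ j, 0 < p j)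
    (hC : IsTauRhoClosed (seqModular p) C) {x : ℕ → ℝ} (hx : x ∈ modularSet (seqModular p))
    {c δ : ℝ} (hδ : seqModular p (δ • x) < ⊤)
    (hc : ∀ z : ℕ → ℝ, (∀ᶠ j in atTop, z j = c * x j) → z ∈ C) {y : ℕ → ℝ}
    (hy : ∀ᶠ j in atTop, y j = (c + δ) * x j) : y ∈ C := by
  refine hC.mem_of_forall_exists_lt
    (mem_modularSet_of_eventually_eq_mul (fun j => (hp j).le) hx hy) fun ε hε => ?_
  obtain ⟨N, hN⟩ := eventually_atTop.1 hy
  obtain ⟨m, hmε, hNm⟩ := ((tendsto_seqModular_tail hδ).eventually_lt_const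
    (ENNReal.ofReal_pos.2 hε) |>.and (eventually_ge_atTop N)).exists
  let z : ℕ → ℝ := fun j => if j < m then y j else c * x j
  have hzC : z ∈ C := hc z (eventually_atTop.2 ⟨m, fun j hj => if_neg hj.not_gt⟩)
  refine ⟨z, hzC, (seqModular_le_tail_of_eq_zero hp (g := δ • x) (fun j hj => ?_) fun j hj => ?_)
    |>.trans_lt hmε⟩
  · simp [z, hj]
  · simp only [z, Pi.sub_apply, if_neg hj.not_gt, hN j (hNm.trans hj), Pi.smul_apply, smul_eq_mul]
    rw [show c * x j - (c + δ) * x j = -(δ * x j) by ring, abs_neg]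

theorem IsTauRhoClosed.modularSet_subset (hp : ∀ j, 0 < p j)
    (hC : IsTauRhoClosed (seqModular p) C)
    (hfin : {a : ℕ → ℝ | (Function.support a).Finite} ⊆ C) :
    modularSet (seqModular p) ⊆ C := by
  intro x hx
  obtain ⟨l, hl, hlx⟩ := hx
  obtain ⟨n, hn⟩ := exists_nat_gt (1 / l)
  have hn0 : (0 : ℝ) < n := (one_div_pos.2 hl).trans hn
  have hstep : seqModular p ((1 / n : ℝ) • x) < ⊤ := by
    refine (seqModular_le_seqModular (fun j => (hp j).le) fun j => ?_).trans_lt hlx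
    simp only [Pi.smul_apply, smul_eq_mul, abs_mul]
    gcongr
    exact (one_div_le hn0 hl).2 hn.le
  have key : ∀ k : ℕ, ∀ y : ℕ → ℝ, (∀ᶠ j in atTop, y j = (k / n : ℝ) * x j) → y ∈ C := by
    intro k
    induction k with
    | zero =>
      intro y hy
      simp only [Nat.cast_zero, zero_div, zero_mul, ← Nat.cofinite_eq_atTop,
        eventually_cofinite] at hy
      exact hfin hy
    | succ k ih =>
      intro y hy
      refine hC.mem_of_eventually_eq_add_mul hp ⟨l, hl, hlx⟩ hstep ih ?_
      filter_upwards [hy] with j hj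
      rw [hj]
      push_cast
      ring
  exact key n x (Eventually.of_forall fun j => by rw [div_self hn0.ne', one_mul])

theorem tauRhoClosure_seqModular_eq_modularSet (hp : ∀ j, 0 < p j) {T : Set (ℕ → ℝ)}
    (hT : T ⊆ modularSet (seqModular p))
    (happrox : ∀ w : ℕ → ℝ, (Function.support w).Finite → ∀ ε > (0 : ℝ),
      ∃ z ∈ T, seqModular p (z - w) < ENNReal.ofReal ε) :
    tauRhoClosure (seqModular p) T = modularSet (seqModular p) :=
  tauRhoClosure_eq_modularSet hT fun _ hTC hC => hC.modularSet_subset hp fun w hw =>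
    hC.mem_of_forall_exists_lt (mem_modularSet_of_support_finite hp hw) fun ε hε =>
      let ⟨z, hzT, hz⟩ := happrox w hw ε hε
      ⟨z, hTC hzT, hz⟩

end Density

theorem exists_rat_finsupp_seqModular_sub_lt {p : ℕ → ℝ} (hp : ∀ j, 1 ≤ p j) {w : ℕ → ℝ}
    (hw : (Function.support w).Finite) {ε : ℝ} (hε : 0 < ε) :
    ∃ f : ℕ →₀ ℚ, seqModular p ((fun j => (f j : ℝ)) - w) < ENNReal.ofReal ε := by
  classical
  obtain ⟨s, hs⟩ : ∃ s : Finset ℕ, Function.support w ⊆ s := ⟨hw.toFinset, hw.coe_toFinset.ge⟩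
  set δ := min 1 (ε / (s.card + 1))
  have hδ : 0 < δ := lt_min one_pos (by positivity)
  choose q hq using fun j => exists_rat_near (w j) hδ
  set f : ℕ →₀ ℚ := Finsupp.indicator s fun j _ => q j
  have hf : ∀ j, (f j : ℝ) = if j ∈ s then (q j : ℝ) else 0 := fun j => by
    simp only [f, Finsupp.indicator_apply, dite_eq_ite]
    split_ifs <;> simp
  have hoff : ∀ j ∉ s, ((fun j => (f j : ℝ)) - w) j = 0 := fun j hj => by
    simp [hf, hj, Function.notMem_support.1 fun h => hj (hs h)]
  refine ⟨f, ?_⟩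
  have hclose : ∀ j, |((fun j => (f j : ℝ)) - w) j| ≤ δ := by
    intro j
    by_cases hj : j ∈ s
    · simpa [hf, hj, abs_sub_comm] using (hq j).le
    · rw [hoff j hj, abs_zero]
      exact hδ.le
  have hsupp : Function.support ((fun j => (f j : ℝ)) - w) ⊆ s := fun j hj => by
    by_contra h
    exact hj (hoff j h)
  calc _ ≤ s.card * ENNReal.ofReal δ := seqModular_le_card_mul hp hsupp (min_le_left _ _) hclose
    _ = ENNReal.ofReal (s.card * δ) := by
      rw [ENNReal.ofReal_mul (Nat.cast_nonneg _), ENNReal.ofReal_natCast]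
    _ < ENNReal.ofReal ε := by
      refine (ENNReal.ofReal_lt_ofReal_iff hε).2 ?_
      have hcard : (0 : ℝ) < s.card + 1 := by positivity
      calc (s.card : ℝ) * δ ≤ s.card * (ε / (s.card + 1)) := by gcongr; exact min_le_right _ _
        _ < ε := by rw [mul_div_assoc', div_lt_iff₀ hcard]; linarith

/-- The `τ_{ρ_p}`-closure of the set of finitely supported sequences is all of
`ℓ^{(p_n)}`; in particular `(ℓ^{(p_n)}, τ_{ρ_p})` is separable. -/
theorem finitely_supported_dense_in_lp_seq (p : ℕ → ℝ) (hp : ∀ j, 1 ≤ p j) :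
    tauRhoClosure (seqModular p) {a : ℕ → ℝ | (Function.support a).Finite} =
      modularSet (seqModular p) ∧
    ∃ D : Set (ℕ → ℝ), D.Countable ∧ D ⊆ modularSet (seqModular p) ∧
      tauRhoClosure (seqModular p) D = modularSet (seqModular p) := by
  have hp₀ : ∀ j, 0 < p j := fun j => one_pos.trans_le (hp j)
  have hfin : {a : ℕ → ℝ | (Function.support a).Finite} ⊆ modularSet (seqModular p) :=
    fun _ ha => mem_modularSet_of_support_finite hp₀ ha
  set D := range fun (f : ℕ →₀ ℚ) j => (f j : ℝ)
  have hD : D ⊆ {a : ℕ → ℝ | (Function.support a).Finite} := by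
    rintro _ ⟨f, rfl⟩
    exact f.hasFiniteSupport.subset (Function.support_comp_subset Rat.cast_zero f)
  refine ⟨tauRhoClosure_seqModular_eq_modularSet hp₀ hfin fun w hw ε hε => ⟨w, hw, ?_⟩,
    D, countable_range _, hD.trans hfin,
    tauRhoClosure_seqModular_eq_modularSet hp₀ (hD.trans hfin) fun w hw ε hε => ?_⟩
  · rw [sub_self, seqModular_zero hp₀]
    exact ENNReal.ofReal_pos.2 hε
  · obtain ⟨f, hf⟩ := exists_rat_finsupp_seqModular_sub_lt hp hw hε
    exact ⟨_, mem_range_self f, hf⟩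
end

section
/- Let p = (p_n) be a sequence with p_n ∈ (1,∞) for all n, and let ‖·‖_{(p_n)} denote the Luxemburg norm of the modular ρ_p on ℓ^{(p_n)}. Then: (i) ℓ^{(p_n)} ⊆ ℓ^∞ and ‖a‖_∞ ≤ ‖a‖_{(p_n)} for every a ∈ ℓ^{(p_n)}; (ii) ℓ^{(p_n)} = ℓ^∞ with ‖·‖_{(p_n)} equivalent to ‖·‖_∞ if and only if there exists λ ∈ (0,1) with Σ_{n=1}^∞ λ^{p_n} < ∞; moreover these conditions hold if and only if the constant sequence 𝟙 = (1,1,1,…) belongs to ℓ^{(p_n)}. -/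
open Filter Topology ENNReal

/-- The Luxemburg norm `‖x‖_ρ := inf {λ > 0 : ρ(x/λ) ≤ 1}`. -/
noncomputable def luxNorm {X : Type*} [AddCommGroup X] [Module ℝ X] (ρ : X → ℝ≥0∞) (x : X) : ℝ :=
  sInf {l : ℝ | 0 < l ∧ ρ (l⁻¹ • x) ≤ 1}

/-- The supremum norm of a bounded real sequence. -/
noncomputable def supNorm (a : ℕ → ℝ) : ℝ :=
  sSup (Set.range fun j => |a j|)

lemma seqModular_smul_le (p : ℕ → ℝ) (hp : ∀ j, 1 < p j) (a : ℕ → ℝ)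
    {c : ℝ} (hc0 : 0 < c) (hc1 : c ≤ 1) :
    seqModular p (c • a) ≤ ENNReal.ofReal c * seqModular p a := by
  rw [seqModular, seqModular, ← ENNReal.tsum_mul_left]
  refine ENNReal.tsum_le_tsum fun j => ?_
  have h1 : |(c • a) j| = c * |a j| := by
    simp [abs_mul, abs_of_pos hc0]
  rw [h1, Real.mul_rpow hc0.le (abs_nonneg _)]
  have h2 : c ^ p j ≤ c := by
    calc c ^ p j ≤ c ^ (1:ℝ) := Real.rpow_le_rpow_of_exponent_ge hc0 hc1 (hp j).le
    _ = c := Real.rpow_one c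
  calc ENNReal.ofReal (c ^ p j * |a j| ^ p j)
      ≤ ENNReal.ofReal (c * |a j| ^ p j) := ENNReal.ofReal_le_ofReal
        (mul_le_mul_of_nonneg_right h2 (Real.rpow_nonneg (abs_nonneg _) _))
    _ = ENNReal.ofReal c * ENNReal.ofReal (|a j| ^ p j) := ENNReal.ofReal_mul hc0.le

lemma exists_smul_le_one (p : ℕ → ℝ) (hp : ∀ j, 1 < p j) (a : ℕ → ℝ)
    (hfin : seqModular p a < ⊤) :
    ∃ c : ℝ, 0 < c ∧ c ≤ 1 ∧ seqModular p (c • a) ≤ 1 := by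
  set T := seqModular p a with hT
  have hT0 : (0:ℝ) ≤ T.toReal := ENNReal.toReal_nonneg
  set c : ℝ := min 1 (1 / (T.toReal + 1)) with hc
  have hc0 : 0 < c := lt_min one_pos (by positivity)
  have hc1 : c ≤ 1 := min_le_left _ _
  refine ⟨c, hc0, hc1, ?_⟩
  calc seqModular p (c • a) ≤ ENNReal.ofReal c * T := seqModular_smul_le p hp a hc0 hc1
    _ ≤ 1 := by
      rw [← ENNReal.ofReal_toReal hfin.ne, ← ENNReal.ofReal_mul hc0.le]
      refine ENNReal.ofReal_le_one.mpr ?_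
      have h3 : c ≤ 1 / (T.toReal + 1) := min_le_right _ _
      have h4 : (1/(T.toReal+1)) * T.toReal ≤ 1 := by
        rw [div_mul_eq_mul_div, one_mul]
        exact (div_le_one (by positivity)).mpr (by linarith)
      nlinarith

lemma exists_mem_S (p : ℕ → ℝ) (hp : ∀ j, 1 < p j) (a : ℕ → ℝ)
    (ha : a ∈ modularSet (seqModular p)) :
    ∃ l : ℝ, 0 < l ∧ seqModular p (l⁻¹ • a) ≤ 1 := by
  obtain ⟨l₀, hl₀, hfin⟩ := ha
  obtain ⟨c, hc0, hc1, hle⟩ := exists_smul_le_one p hp (l₀ • a) hfin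
  refine ⟨(c * l₀)⁻¹, by positivity, ?_⟩
  rwa [inv_inv, mul_smul]

lemma abs_le_of_mem_S (p : ℕ → ℝ) (hp : ∀ j, 1 < p j) (a : ℕ → ℝ)
    {l : ℝ} (hl : 0 < l) (h : seqModular p (l⁻¹ • a) ≤ 1) (j : ℕ) : |a j| ≤ l := by
  have hterm : ENNReal.ofReal (|(l⁻¹ • a) j| ^ p j) ≤ 1 := le_trans (ENNReal.le_tsum j) h
  have h1 : |(l⁻¹ • a) j| ^ p j ≤ 1 := ENNReal.ofReal_le_one.mp hterm
  have hb : |(l⁻¹ • a) j| ≤ 1 := by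
    by_contra hgt
    push_neg at hgt
    have h2 : (1:ℝ) ^ p j < |(l⁻¹ • a) j| ^ p j :=
      Real.rpow_lt_rpow (by norm_num) hgt (lt_trans one_pos (hp j))
    rw [Real.one_rpow] at h2
    linarith
  have h3 : l⁻¹ * |a j| ≤ 1 := by
    simpa [abs_mul, abs_of_pos (inv_pos.mpr hl)] using hb
  rw [inv_mul_le_iff₀ hl, mul_one] at h3
  exact h3

lemma abs_le_luxNorm (p : ℕ → ℝ) (hp : ∀ j, 1 < p j) (a : ℕ → ℝ)
    (ha : a ∈ modularSet (seqModular p)) (j : ℕ) : |a j| ≤ luxNorm (seqModular p) a := by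
  obtain ⟨l, hl, hle⟩ := exists_mem_S p hp a ha
  exact le_csInf ⟨l, hl, hle⟩ (by rintro m ⟨hm, hle'⟩; exact abs_le_of_mem_S p hp a hm hle' j)

lemma seqModular_const (p : ℕ → ℝ) {x : ℝ} (hx : 0 ≤ x) :
    seqModular p (fun _ => x) = ∑' j, ENNReal.ofReal (x ^ p j) := by
  simp [seqModular, abs_of_nonneg hx]

lemma luxNorm_le_of_bdd (p : ℕ → ℝ) (hp : ∀ j, 1 < p j) {μ : ℝ} (hμ : 0 < μ)
    (hμ1 : (∑' j, ENNReal.ofReal (μ ^ p j)) ≤ 1) (a : ℕ → ℝ) {M : ℝ}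
    (hM : ∀ j, |a j| ≤ M) : luxNorm (seqModular p) a ≤ μ⁻¹ * M := by
  have hM0 : 0 ≤ M := le_trans (abs_nonneg _) (hM 0)
  refine le_of_forall_pos_le_add fun ε hε => ?_
  set m : ℝ := μ⁻¹ * M + ε with hm
  have hm0 : 0 < m := by positivity
  have hmem : m ∈ {l : ℝ | 0 < l ∧ seqModular p (l⁻¹ • a) ≤ 1} := by
    refine ⟨hm0, le_trans (ENNReal.tsum_le_tsum fun j => ?_) hμ1⟩
    refine ENNReal.ofReal_le_ofReal (Real.rpow_le_rpow (abs_nonneg _) ?_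
      (le_of_lt (lt_trans one_pos (hp j))))
    have h1 : |(m⁻¹ • a) j| = m⁻¹ * |a j| := by
      simp [abs_mul, abs_of_pos (inv_pos.mpr hm0)]
    rw [h1]
    have h2 : m⁻¹ * |a j| ≤ m⁻¹ * M := by
      have := hM j
      have h3 : (0:ℝ) ≤ m⁻¹ := (inv_pos.mpr hm0).le
      nlinarith
    refine le_trans h2 ?_
    rw [inv_mul_le_iff₀ hm0]
    have h4 : μ⁻¹ * M ≤ m := by simp [hm]; linarith
    calc M = μ⁻¹ * M * μ := by field_simp
      _ ≤ m * μ := mul_le_mul_of_nonneg_right h4 hμ.le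
  refine csInf_le ⟨0, ?_⟩ hmem
  rintro x ⟨hx, -⟩
  exact hx.le

/-- (i) `ℓ^{(p_n)} ⊆ ℓ^∞` with `‖a‖_∞ ≤ ‖a‖_{(p_n)}`;
(ii) `ℓ^{(p_n)} = ℓ^∞` with equivalent norms iff `Σ_n λ^{p_n} < ∞` for some `λ ∈ (0,1)`,
iff the constant sequence `𝟙 = (1,1,…)` belongs to `ℓ^{(p_n)}`. -/
theorem lp_seq_subset_linf_and_iso_characterization (p : ℕ → ℝ) (hp : ∀ j, 1 < p j) :
    (∀ a ∈ modularSet (seqModular p),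
      (∃ C : ℝ, ∀ j, |a j| ≤ C) ∧ ∀ j, |a j| ≤ luxNorm (seqModular p) a) ∧
    ((modularSet (seqModular p) = {a : ℕ → ℝ | ∃ C : ℝ, ∀ j, |a j| ≤ C} ∧
        ∃ c₁ : ℝ, 0 < c₁ ∧ ∃ c₂ : ℝ, 0 < c₂ ∧ ∀ a ∈ modularSet (seqModular p),
          supNorm a ≤ c₁ * luxNorm (seqModular p) a ∧
          luxNorm (seqModular p) a ≤ c₂ * supNorm a) ↔
      (∃ l : ℝ, 0 < l ∧ l < 1 ∧ (∑' j, ENNReal.ofReal (l ^ p j)) < ⊤)) ∧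
    ((∃ l : ℝ, 0 < l ∧ l < 1 ∧ (∑' j, ENNReal.ofReal (l ^ p j)) < ⊤) ↔
      (fun _ : ℕ => (1 : ℝ)) ∈ modularSet (seqModular p)) := by
  have shrink : ∀ lam : ℝ, 0 < lam → (∑' j, ENNReal.ofReal (lam ^ p j)) < ⊤ →
      ∃ l : ℝ, 0 < l ∧ l < 1 ∧ (∑' j, ENNReal.ofReal (l ^ p j)) < ⊤ := by
    intro lam hlam hfin
    refine ⟨min lam (1/2), lt_min hlam (by norm_num),
      lt_of_le_of_lt (min_le_right _ _) (by norm_num), ?_⟩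
    refine lt_of_le_of_lt (ENNReal.tsum_le_tsum fun j => ENNReal.ofReal_le_ofReal
      (Real.rpow_le_rpow (lt_min hlam (by norm_num)).le (min_le_left _ _)
        (lt_trans one_pos (hp j)).le)) hfin
  have one_mem_iff : ((fun _ : ℕ => (1:ℝ)) ∈ modularSet (seqModular p)) →
      ∃ l : ℝ, 0 < l ∧ l < 1 ∧ (∑' j, ENNReal.ofReal (l ^ p j)) < ⊤ := by
    rintro ⟨lam, hlam, hfin⟩
    have he : (lam • fun _ : ℕ => (1:ℝ)) = fun _ => lam := by funext j; simp
    rw [he, seqModular_const p hlam.le] at hfin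
    exact shrink lam hlam hfin
  have mem_of : ∀ l : ℝ, 0 < l → (∑' j, ENNReal.ofReal (l ^ p j)) < ⊤ →
      (fun _ : ℕ => (1:ℝ)) ∈ modularSet (seqModular p) := by
    intro l hl hfin
    refine ⟨l, hl, ?_⟩
    have he : (l • fun _ : ℕ => (1:ℝ)) = fun _ => l := by funext j; simp
    rw [he, seqModular_const p hl.le]
    exact hfin
  have part1 : ∀ a ∈ modularSet (seqModular p),
      (∃ C : ℝ, ∀ j, |a j| ≤ C) ∧ ∀ j, |a j| ≤ luxNorm (seqModular p) a :=
    fun a ha => ⟨⟨luxNorm (seqModular p) a, abs_le_luxNorm p hp a ha⟩, abs_le_luxNorm p hp a ha⟩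
  refine ⟨part1, ?_, ⟨fun ⟨l, h0, _, hf⟩ => mem_of l h0 hf, one_mem_iff⟩⟩
  constructor
  · rintro ⟨hset, -⟩
    apply one_mem_iff
    rw [hset]
    exact ⟨1, fun j => by norm_num⟩
  · rintro ⟨l, hl0, hl1, hfin⟩
    constructor
    · ext a
      constructor
      · intro ha
        exact (part1 a ha).1
      · rintro ⟨C, hC⟩
        have hC0 : (0:ℝ) ≤ C := le_trans (abs_nonneg _) (hC 0)
        refine ⟨l / (C + 1), by positivity, ?_⟩
        rw [seqModular]
        refine lt_of_le_of_lt (ENNReal.tsum_le_tsum fun j => ENNReal.ofReal_le_ofReal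
          (Real.rpow_le_rpow (abs_nonneg _) ?_ (lt_trans one_pos (hp j)).le)) hfin
        have h1 : |((l / (C + 1)) • a) j| = (l / (C + 1)) * |a j| := by
          simp [abs_mul, abs_of_pos (show (0:ℝ) < l / (C+1) by positivity)]
        rw [h1]
        calc (l / (C + 1)) * |a j| ≤ (l / (C + 1)) * (C + 1) := by
              have := hC j
              have hpos : (0:ℝ) ≤ l / (C+1) := by positivity
              nlinarith
          _ = l := by field_simp
    · have hfin' : seqModular p (fun _ => l) < ⊤ := by
        rw [seqModular_const p hl0.le]; exact hfin
      obtain ⟨c, hc0, hc1, hcle⟩ := exists_smul_le_one p hp (fun _ => l) hfin'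
      have he : (c • fun _ : ℕ => l) = fun _ => c * l := by funext j; simp
      rw [he, seqModular_const p (by positivity)] at hcle
      have hμ : (0:ℝ) < c * l := by positivity
      refine ⟨1, one_pos, (c * l)⁻¹, by positivity, fun a ha => ?_⟩
      obtain ⟨⟨C, hC⟩, hlux⟩ := part1 a ha
      have hbdd : BddAbove (Set.range fun j => |a j|) :=
        ⟨C, by rintro _ ⟨j, rfl⟩; exact hC j⟩
      have hsup : ∀ j, |a j| ≤ supNorm a := fun j => le_csSup hbdd (Set.mem_range_self j)
      constructor
      · rw [one_mul]
        exact csSup_le (Set.range_nonempty _) (by rintro _ ⟨j, rfl⟩; exact hlux j)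
      · exact luxNorm_le_of_bdd p hp hμ hcle a hsup
end
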